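/- arXiv:1702.00739 — 2 statements merged into one kernel-verified Lean document; each statement's English description precedes it below -/
import Mathlib

section
/- Define B̌(G) := min over D ∈ ℝ^{2×2} of ∫_{-1/2}^{1/2} Q₂(D + tG + B̌(t)) dt, with B̌(t) as the piecewise-constant bilayer profile taking values M̌₁ on [0,1/2) and M̌₂ on (-1/2,0). Then B̌(G) = (1/12) Q₂(G + (3/2)(M̌₁ - M̌₂)) + c - (1/4) Q₂(M̌₁ + M̌₂), where c = (1/16)[5Q₂(M̌₁) + 5Q₂(M̌₂) + 6L(M̌₁,M̌₂)]. -/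
open Matrix MeasureTheory

/-! Along the thickness variable the integrand `Q₂(D + tG + B̌(t))` is a quadratic polynomial
in `t` on each layer, so the energy is an explicit quadratic function of `D`. Completing the
square shows that it equals the claimed value plus `Q₂(D + (M̌₁ + M̌₂)/2)`, which is nonnegative
and vanishes at `D = -(M̌₁ + M̌₂)/2`. -/

/-- Symmetric part of a matrix. -/
noncomputable def symPart (M : Matrix (Fin 2) (Fin 2) ℝ) : Matrix (Fin 2) (Fin 2) ℝ :=
  (1 / 2 : ℝ) • (M + Mᵀ)

/-- `Q₂(G) = 2μ(|sym G|² + γ (tr G)²)`. -/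
noncomputable def Q2 (μ γ : ℝ) (G : Matrix (Fin 2) (Fin 2) ℝ) : ℝ :=
  2 * μ * ((∑ i, ∑ j, (symPart G i j) ^ 2) + γ * (Matrix.trace G) ^ 2)

/-- Bilinear form associated with `Q₂`. -/
noncomputable def L2 (μ γ : ℝ) (G H : Matrix (Fin 2) (Fin 2) ℝ) : ℝ :=
  2 * μ * ((∑ i, ∑ j, symPart G i j * symPart H i j) +
    γ * Matrix.trace G * Matrix.trace H)

/-- Piecewise constant bilayer profile. -/
noncomputable def bilayerB (M₁ M₂ : Matrix (Fin 2) (Fin 2) ℝ) (t : ℝ) :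
    Matrix (Fin 2) (Fin 2) ℝ :=
  if 0 ≤ t then M₁ else M₂

section QuadraticForm

variable (μ γ : ℝ)

lemma Q2_zero : Q2 μ γ 0 = 0 := by
  simp [Q2, symPart]

lemma Q2_nonneg {μ γ : ℝ} (hμ : 0 ≤ μ) (hγ : 0 ≤ γ) (A : Matrix (Fin 2) (Fin 2) ℝ) :
    0 ≤ Q2 μ γ A := by
  have hsym : 0 ≤ ∑ i, ∑ j, (symPart A i j) ^ 2 :=
    Finset.sum_nonneg fun i _ => Finset.sum_nonneg fun j _ => sq_nonneg _
  unfold Q2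
  positivity

lemma Q2_add_smul (A G : Matrix (Fin 2) (Fin 2) ℝ) (t : ℝ) :
    Q2 μ γ (A + t • G) = Q2 μ γ A + 2 * t * L2 μ γ A G + t ^ 2 * Q2 μ γ G := by
  simp only [Q2, L2, symPart, Matrix.trace, Matrix.diag, Fin.sum_univ_two,
    Matrix.add_apply, Matrix.smul_apply, Matrix.transpose_apply, smul_eq_mul]
  ring

lemma bilayer_energy_complete_square (M₁ M₂ G D : Matrix (Fin 2) (Fin 2) ℝ) :
    (Q2 μ γ (D + M₁) + Q2 μ γ (D + M₂)) / 2 +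
        (L2 μ γ (D + M₁) G - L2 μ γ (D + M₂) G) / 4 + Q2 μ γ G / 12 =
      (1 / 12) * Q2 μ γ (G + (3 / 2 : ℝ) • (M₁ - M₂)) +
        (1 / 16) * (5 * Q2 μ γ M₁ + 5 * Q2 μ γ M₂ + 6 * L2 μ γ M₁ M₂) -
        (1 / 4) * Q2 μ γ (M₁ + M₂) + Q2 μ γ (D + (1 / 2 : ℝ) • (M₁ + M₂)) := by
  simp only [Q2, L2, symPart, Matrix.trace, Matrix.diag, Fin.sum_univ_two,
    Matrix.add_apply, Matrix.smul_apply, Matrix.sub_apply, Matrix.transpose_apply,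
    smul_eq_mul]
  ring

end QuadraticForm

lemma integral_quadratic (a b c u v : ℝ) :
    ∫ t in u..v, (a + 2 * t * b + t ^ 2 * c) =
      a * (v - u) + b * (v ^ 2 - u ^ 2) + c * (v ^ 3 - u ^ 3) / 3 := by
  have hderiv : ∀ t ∈ Set.uIcc u v,
      HasDerivAt (fun t => a * t + b * t ^ 2 + c * t ^ 3 / 3) (a + 2 * t * b + t ^ 2 * c) t := by
    intro t _
    refine ((((hasDerivAt_id t).const_mul a).add ((hasDerivAt_pow 2 t).const_mul b)).add
      (((hasDerivAt_pow 3 t).const_mul c).div_const 3)).congr_deriv ?_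
    push_cast
    ring
  rw [intervalIntegral.integral_eq_sub_of_hasDerivAt hderiv
    ((Continuous.intervalIntegrable (by fun_prop) u v))]
  ring

lemma integral_bilayerB {g : ℝ → Matrix (Fin 2) (Fin 2) ℝ → ℝ} {M₁ M₂ : Matrix (Fin 2) (Fin 2) ℝ}
    (hg₁ : Continuous (g · M₁)) (hg₂ : Continuous (g · M₂)) {a b : ℝ} (ha : a ≤ 0) (hb : 0 ≤ b) :
    ∫ t in a..b, g t (bilayerB M₁ M₂ t) = (∫ t in a..0, g t M₂) + ∫ t in 0..b, g t M₁ := by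
  have hlower : Set.EqOn (g · M₂) (fun t => g t (bilayerB M₁ M₂ t)) (Set.uIoo a 0) := by
    intro t ht
    rw [Set.uIoo_of_le ha] at ht
    simp [bilayerB, not_le.mpr ht.2]
  have hupper : Set.EqOn (g · M₁) (fun t => g t (bilayerB M₁ M₂ t)) (Set.uIoo 0 b) := by
    intro t ht
    rw [Set.uIoo_of_le hb] at ht
    simp [bilayerB, ht.1.le]
  rw [← intervalIntegral.integral_add_adjacent_intervals
      ((hg₂.intervalIntegrable a 0).congr_uIoo hlower)
      ((hg₁.intervalIntegrable 0 b).congr_uIoo hupper),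
    intervalIntegral.integral_congr_uIoo hlower.symm,
    intervalIntegral.integral_congr_uIoo hupper.symm]

lemma integral_Q2_bilayer (μ γ : ℝ) (M₁ M₂ G D : Matrix (Fin 2) (Fin 2) ℝ) :
    ∫ t in (-(1:ℝ)/2)..(1/2), Q2 μ γ (D + t • G + bilayerB M₁ M₂ t) =
      (Q2 μ γ (D + M₁) + Q2 μ γ (D + M₂)) / 2 +
        (L2 μ γ (D + M₁) G - L2 μ γ (D + M₂) G) / 4 + Q2 μ γ G / 12 := by
  have hlayer (M : Matrix (Fin 2) (Fin 2) ℝ) (t : ℝ) :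
      Q2 μ γ (D + t • G + M) = Q2 μ γ (D + M) + 2 * t * L2 μ γ (D + M) G + t ^ 2 * Q2 μ γ G := by
    rw [add_right_comm, Q2_add_smul]
  have hcont (M : Matrix (Fin 2) (Fin 2) ℝ) :
      Continuous fun t : ℝ => Q2 μ γ (D + t • G + M) := by
    simp only [hlayer]
    fun_prop
  rw [integral_bilayerB (g := fun t M => Q2 μ γ (D + t • G + M)) (hcont M₁) (hcont M₂) (by norm_num) (by norm_num)]
  simp only [hlayer, integral_quadratic]
  ring

theorem bilayer_relaxed_energy_general (μ γ : ℝ) (hμ : 0 < μ) (hγ : 0 < γ)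
    (M₁ M₂ : Matrix (Fin 2) (Fin 2) ℝ)
    (G : Matrix (Fin 2) (Fin 2) ℝ) :
    IsLeast {x : ℝ | ∃ D : Matrix (Fin 2) (Fin 2) ℝ,
        x = ∫ t in (-(1:ℝ)/2)..(1/2), Q2 μ γ (D + t • G + bilayerB M₁ M₂ t)}
      ((1 / 12) * Q2 μ γ (G + (3 / 2 : ℝ) • (M₁ - M₂)) +
        (1 / 16) * (5 * Q2 μ γ M₁ + 5 * Q2 μ γ M₂ + 6 * L2 μ γ M₁ M₂) -
        (1 / 4) * Q2 μ γ (M₁ + M₂)) := by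
  refine ⟨⟨-((1 / 2 : ℝ) • (M₁ + M₂)), ?_⟩, ?_⟩
  · rw [integral_Q2_bilayer, bilayer_energy_complete_square, neg_add_cancel, Q2_zero, add_zero]
  · rintro _ ⟨D, rfl⟩
    rw [integral_Q2_bilayer, bilayer_energy_complete_square]
    exact le_add_of_nonneg_right (Q2_nonneg hμ.le hγ.le _)

theorem bilayer_relaxed_energy (μ γ : ℝ) (hμ : 0 < μ) (hγ : 0 < γ)
    (M₁ M₂ : Matrix (Fin 2) (Fin 2) ℝ) (h₁ : M₁ᵀ = M₁) (h₂ : M₂ᵀ = M₂)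
    (G : Matrix (Fin 2) (Fin 2) ℝ) :
    IsLeast {x : ℝ | ∃ D : Matrix (Fin 2) (Fin 2) ℝ,
        x = ∫ t in (-(1:ℝ)/2)..(1/2), Q2 μ γ (D + t • G + bilayerB M₁ M₂ t)}
      ((1 / 12) * Q2 μ γ (G + (3 / 2 : ℝ) • (M₁ - M₂)) +
        (1 / 16) * (5 * Q2 μ γ M₁ + 5 * Q2 μ γ M₂ + 6 * L2 μ γ M₁ M₂) -
        (1 / 4) * Q2 μ γ (M₁ + M₂)) :=
  bilayer_relaxed_energy_general μ γ hμ hγ M₁ M₂ G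
end

section
/- Let Q₂(G) = 2μ(|sym G|² + γ tr²G) on 2×2 matrices, μ > 0, γ ≥ 0, and let Ā = k·diag(-1, 1) with k > 0. Among 2×2 symmetric matrices A with det A = 0 (rank at most 1), the minimum of Q₂(A - Ā) is 2μk²(1 + 2γ)/(1+γ), attained exactly at A = (k/(1+γ))·diag(-1, 0) and A = (k/(1+γ))·diag(0, 1). -/
open Matrix

/-! Writing `a, b, c` for the entries of the symmetric matrix `A`, multiplying the energy by
`1 + γ` and completing squares gives
`(1 + γ) Q₂(A - Ā) = 2μ (k²(1 + 2γ) + ((1 + γ)(a - c) + k)² + (2(1 + γ) b)²)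
  + 4μ(1 + γ)(1 + 2γ) det A`.
On `det A = 0` the minimum is therefore reached exactly when `b = 0` and `(1 + γ)(a - c) = -k`;
together with `ac = b² = 0` this leaves the two cylindrical curvatures. -/

lemma Q2_eq_entries (μ γ : ℝ) (G : Matrix (Fin 2) (Fin 2) ℝ) :
    Q2 μ γ G = 2 * μ * (G 0 0 ^ 2 + (G 0 1 + G 1 0) ^ 2 / 2 + G 1 1 ^ 2
      + γ * (G 0 0 + G 1 1) ^ 2) := by
  simp only [Q2, symPart, Fin.sum_univ_two, trace_fin_two, Matrix.smul_apply, Matrix.add_apply,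
    transpose_apply, smul_eq_mul]
  ring

lemma one_add_mul_Q2_sub_twist_of_det_eq_zero (μ γ k : ℝ) {A : Matrix (Fin 2) (Fin 2) ℝ}
    (hA : Aᵀ = A) (hdet : A.det = 0) :
    (1 + γ) * Q2 μ γ (A - k • !![(-1 : ℝ), 0; 0, 1]) =
      2 * μ * (k ^ 2 * (1 + 2 * γ)
        + (((1 + γ) * (A 0 0 - A 1 1) + k) ^ 2 + (2 * (1 + γ) * A 0 1) ^ 2)) := by
  rw [det_fin_two, IsSymm.apply hA 0 1] at hdet
  rw [Q2_eq_entries]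
  simp only [Matrix.sub_apply, Matrix.smul_apply, of_apply, cons_val', cons_val_zero, cons_val_one,
    empty_val', cons_val_fin_one, smul_eq_mul, IsSymm.apply hA 0 1]
  linear_combination 4 * μ * (1 + γ) * (1 + 2 * γ) * hdet

lemma transpose_smul_cylinder (c : ℝ) :
    (c • !![(0 : ℝ), 0; 0, 1])ᵀ = c • !![(0 : ℝ), 0; 0, 1] := by
  ext i j; fin_cases i <;> fin_cases j <;> rfl

lemma det_smul_cylinder (c : ℝ) : (c • !![(0 : ℝ), 0; 0, 1]).det = 0 := by
  simp [smul_of]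

variable {μ γ : ℝ} (k : ℝ)

lemma le_Q2_sub_twist_of_det_eq_zero (hμ : 0 ≤ μ) (hγ : 0 < 1 + γ)
    {A : Matrix (Fin 2) (Fin 2) ℝ} (hA : Aᵀ = A) (hdet : A.det = 0) :
    2 * μ * k ^ 2 * (1 + 2 * γ) / (1 + γ) ≤ Q2 μ γ (A - k • !![(-1 : ℝ), 0; 0, 1]) := by
  rw [div_le_iff₀ hγ, mul_comm _ (1 + γ),
    one_add_mul_Q2_sub_twist_of_det_eq_zero μ γ k hA hdet]
  nlinarith [mul_nonneg hμ (add_nonneg (sq_nonneg ((1 + γ) * (A 0 0 - A 1 1) + k))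
    (sq_nonneg (2 * (1 + γ) * A 0 1)))]

lemma Q2_sub_twist_cylinder (hγ : 1 + γ ≠ 0) :
    Q2 μ γ ((k / (1 + γ)) • !![(0 : ℝ), 0; 0, 1] - k • !![(-1 : ℝ), 0; 0, 1]) =
      2 * μ * k ^ 2 * (1 + 2 * γ) / (1 + γ) := by
  rw [eq_div_iff hγ, mul_comm, one_add_mul_Q2_sub_twist_of_det_eq_zero μ γ k
    (transpose_smul_cylinder _) (det_smul_cylinder _)]
  simp only [Matrix.smul_apply, of_apply, cons_val', cons_val_zero, cons_val_one, cons_val_fin_one,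
    smul_eq_mul]
  field_simp
  ring

lemma eq_cylinder_of_Q2_sub_twist_eq (hμ : μ ≠ 0) (hγ : 1 + γ ≠ 0)
    {A : Matrix (Fin 2) (Fin 2) ℝ} (hA : Aᵀ = A) (hdet : A.det = 0)
    (hmin : Q2 μ γ (A - k • !![(-1 : ℝ), 0; 0, 1]) =
      2 * μ * k ^ 2 * (1 + 2 * γ) / (1 + γ)) :
    A = (k / (1 + γ)) • !![(-1 : ℝ), 0; 0, 0] ∨
      A = (k / (1 + γ)) • !![(0 : ℝ), 0; 0, 1] := by
  have hsq : ((1 + γ) * (A 0 0 - A 1 1) + k) ^ 2 + (2 * (1 + γ) * A 0 1) ^ 2 = 0 := by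
    have hid := one_add_mul_Q2_sub_twist_of_det_eq_zero μ γ k hA hdet
    rw [hmin, mul_div_cancel₀ _ hγ, mul_assoc] at hid
    linarith [mul_left_cancel₀ (mul_ne_zero two_ne_zero hμ) hid]
  obtain ⟨hdiag, hoff⟩ := (add_eq_zero_iff_of_nonneg (sq_nonneg _) (sq_nonneg _)).mp hsq
  have hac : (1 + γ) * (A 0 0 - A 1 1) = -k :=
    eq_neg_of_add_eq_zero_left (pow_eq_zero_iff two_ne_zero |>.mp hdiag)
  have hb : A 0 1 = 0 := by simpa [hγ] using pow_eq_zero_iff two_ne_zero |>.mp hoff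
  rw [det_fin_two, IsSymm.apply hA 0 1, hb, mul_zero, sub_zero] at hdet
  rw [eta_fin_two A, IsSymm.apply hA 0 1, hb, smul_of]
  rcases mul_eq_zero.mp hdet with ha | hc
  · right
    rw [ha] at hac ⊢
    rw [show A 1 1 = k / (1 + γ) by field_simp; linarith]
    ext i j; fin_cases i <;> fin_cases j <;> simp
  · left
    rw [hc] at hac ⊢
    rw [show A 0 0 = -(k / (1 + γ)) by field_simp; linarith]
    ext i j; fin_cases i <;> fin_cases j <;> simp

theorem twist_pointwise_min_over_degenerate_general (μ γ k : ℝ) (hμ : 0 < μ) (hγ : 0 ≤ γ) :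
    IsLeast {x : ℝ | ∃ A : Matrix (Fin 2) (Fin 2) ℝ, Aᵀ = A ∧ A.det = 0 ∧
        x = Q2 μ γ (A - k • !![(-1 : ℝ), 0; 0, 1])}
      (2 * μ * k ^ 2 * (1 + 2 * γ) / (1 + γ)) ∧
    (∀ A : Matrix (Fin 2) (Fin 2) ℝ, Aᵀ = A → A.det = 0 →
      Q2 μ γ (A - k • !![(-1 : ℝ), 0; 0, 1]) = 2 * μ * k ^ 2 * (1 + 2 * γ) / (1 + γ) →
      A = (k / (1 + γ)) • !![(-1 : ℝ), 0; 0, 0] ∨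
      A = (k / (1 + γ)) • !![(0 : ℝ), 0; 0, 1]) := by
  have hγ' : 0 < 1 + γ := by linarith
  refine ⟨⟨⟨_, transpose_smul_cylinder _, det_smul_cylinder _,
    (Q2_sub_twist_cylinder k hγ'.ne').symm⟩, ?_⟩,
    fun A hA hdet ↦ eq_cylinder_of_Q2_sub_twist_eq k hμ.ne' hγ'.ne' hA hdet⟩
  rintro x ⟨A, hA, hdet, rfl⟩
  exact le_Q2_sub_twist_of_det_eq_zero k hμ.le hγ' hA hdet

theorem twist_pointwise_min_over_degenerate (μ γ k : ℝ) (hμ : 0 < μ) (hγ : 0 ≤ γ)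
    (hk : 0 < k) :
    IsLeast {x : ℝ | ∃ A : Matrix (Fin 2) (Fin 2) ℝ, Aᵀ = A ∧ A.det = 0 ∧
        x = Q2 μ γ (A - k • !![(-1 : ℝ), 0; 0, 1])}
      (2 * μ * k ^ 2 * (1 + 2 * γ) / (1 + γ)) ∧
    (∀ A : Matrix (Fin 2) (Fin 2) ℝ, Aᵀ = A → A.det = 0 →
      Q2 μ γ (A - k • !![(-1 : ℝ), 0; 0, 1]) = 2 * μ * k ^ 2 * (1 + 2 * γ) / (1 + γ) →
      A = (k / (1 + γ)) • !![(-1 : ℝ), 0; 0, 0] ∨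
      A = (k / (1 + γ)) • !![(0 : ℝ), 0; 0, 1]) :=
  twist_pointwise_min_over_degenerate_general μ γ k hμ hγ
end
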